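/- arXiv:2008.09199 — 2 statements merged into one kernel-verified Lean document; each statement's English description precedes it below -/
import Mathlib

section
/- For a geodesic ray b in a proper CAT(0) space, the four κ-slim conditions are pairwise equivalent: b satisfies κ-slim condition 1 if and only if it satisfies κ-slim condition 2, if and only if it satisfies κ-slim condition 3, if and only if it satisfies κ-slim condition 4. -/
open Set Metric Filter ENNReal

noncomputable section

/-- The set of points lying on a geodesic from `x` to `y`; in a uniquely geodesic space
(such as a CAT(0) space) this is the geodesic segment `[x,y]`. -/
def seg {X : Type*} [MetricSpace X] (x y : X) : Set X :=
  {z | dist x z + dist z y = dist x y}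

/-- `X` is a geodesic metric space. -/
def GeodesicSpace (X : Type*) [MetricSpace X] : Prop :=
  ∀ x y : X, ∃ γ : ℝ → X, γ 0 = x ∧ γ (dist x y) = y ∧
    ∀ s ∈ Icc (0:ℝ) (dist x y), ∀ t ∈ Icc (0:ℝ) (dist x y), dist (γ s) (γ t) = |s - t|

/-- `X` is a CAT(0) space: a geodesic metric space satisfying the CN (Bruhat–Tits)
inequality (comparison of triangles with Euclidean ones). -/
def IsCAT0 (X : Type*) [MetricSpace X] : Prop :=
  GeodesicSpace X ∧ ∀ x y z m : X, dist y m = dist y z / 2 → dist m z = dist y z / 2 →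
    dist x m ^ 2 ≤ (dist x y ^ 2 + dist x z ^ 2) / 2 - dist y z ^ 2 / 4

/-- `b` restricted to `[0,∞)` is a geodesic ray (an isometric embedding of `[0,∞)`). -/
def IsGeodesicRay {X : Type*} [MetricSpace X] (b : ℝ → X) : Prop :=
  ∀ s t : ℝ, 0 ≤ s → 0 ≤ t → dist (b s) (b t) = |s - t|

/-- The image of the geodesic ray `b`. -/
def rayIm {X : Type*} [MetricSpace X] (b : ℝ → X) : Set X := b '' Ici 0

/-- `κ` is a sublinear function: monotone increasing, concave, `≥ 1`, with `κ(t)/t → 0`. -/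
structure IsSublinearFn (κ : ℝ → ℝ) : Prop where
  one_le : ∀ t : ℝ, 1 ≤ κ t
  mono : Monotone κ
  concave : ConcaveOn ℝ (Ici 0) κ
  sublinear : Tendsto (fun t => κ t / t) atTop (nhds 0)

/-- `π` is the nearest-point projection onto the geodesic ray `b`:
`π x` lies on `b` and realizes the distance from `x` to `b`. -/
def IsProj {X : Type*} [MetricSpace X] (b : ℝ → X) (π : X → X) : Prop :=
  ∀ x : X, π x ∈ rayIm b ∧ dist x (π x) = infDist x (rayIm b)

/-- The geodesic ray `b` (with projection `π`) is `κ`-contracting: there is `c ≥ 0` such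
that whenever `d(x,y) ≤ d(x,b)` we have `d(x_b, y_b) ≤ c·κ(‖x‖)`. -/
def KappaContracting {X : Type*} [MetricSpace X] (κ : ℝ → ℝ) (o : X) (b : ℝ → X)
    (π : X → X) : Prop :=
  ∃ c ≥ (0:ℝ), ∀ x y : X, dist x y ≤ infDist x (rayIm b) →
    dist (π x) (π y) ≤ c * κ (dist o x)

/-- `b` is `κ`-contracting with contracting constant `c` (projection form, Lemma 2.6):
whenever `d(x,y) < d(x,b)` we have `d(x_b, y_b) ≤ c·κ(‖x_b‖)`. -/
def KappaContractingWith {X : Type*} [MetricSpace X] (κ : ℝ → ℝ) (o : X) (b : ℝ → X)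
    (π : X → X) (c : ℝ) : Prop :=
  0 ≤ c ∧ ∀ x y : X, dist x y < infDist x (rayIm b) →
    dist (π x) (π y) ≤ c * κ (dist o (π x))

/-- κ-slim condition 1: `d(x_b, [x,y]) ≤ c·κ(‖x_b‖)` for all `x ∈ X`, `y ∈ im(b)`. -/
def SlimCond1 {X : Type*} [MetricSpace X] (κ : ℝ → ℝ) (o : X) (b : ℝ → X) (π : X → X) : Prop :=
  ∃ c ≥ (0:ℝ), ∀ x : X, ∀ y ∈ rayIm b, infDist (π x) (seg x y) ≤ c * κ (dist o (π x))

/-- κ-slim condition 2: `d(x_b, [x,y]) ≤ c·κ(‖z‖)` for some `z` on `b` between `x_b` and `y`. -/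
def SlimCond2 {X : Type*} [MetricSpace X] (κ : ℝ → ℝ) (o : X) (b : ℝ → X) (π : X → X) : Prop :=
  ∃ c ≥ (0:ℝ), ∀ x : X, ∀ y ∈ rayIm b, ∃ z ∈ rayIm b ∩ seg (π x) y,
    infDist (π x) (seg x y) ≤ c * κ (dist o z)

/-- κ-slim condition 3: for `x y z` with `[y,z] ⊆ im(b)` and `w ∈ [y,z]`,
`d(w, [y,x] ∪ [x,z]) ≤ c·κ(‖x_b‖)`. -/
def SlimCond3 {X : Type*} [MetricSpace X] (κ : ℝ → ℝ) (o : X) (b : ℝ → X) (π : X → X) : Prop :=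
  ∃ c ≥ (0:ℝ), ∀ x y z : X, seg y z ⊆ rayIm b →
    ∀ w ∈ seg y z, infDist w (seg y x ∪ seg x z) ≤ c * κ (dist o (π x))

/-- κ-slim condition 4: for `x ∈ X` and `[y,z] ⊆ im(b)` with `‖y‖ ≤ ‖x_b‖ ≤ ‖z‖` and
`w ∈ [y,z]`, `d(w, [y,x] ∪ [x,z]) ≤ c·κ(‖z‖)`. -/
def SlimCond4 {X : Type*} [MetricSpace X] (κ : ℝ → ℝ) (o : X) (b : ℝ → X) (π : X → X) : Prop :=
  ∃ c ≥ (0:ℝ), ∀ x y z : X, seg y z ⊆ rayIm b →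
    dist o y ≤ dist o (π x) → dist o (π x) ≤ dist o z →
    ∀ w ∈ seg y z, infDist w (seg y x ∪ seg x z) ≤ c * κ (dist o z)

/-!
Everything rests on three consequences of the CN inequality: geodesics are unique, the metric is
convex (geodesics issuing from one point diverge at least linearly), and a nearest point `r` of a
convex set satisfies the Pythagorean inequality `d(p, r)² + d(r, w)² ≤ d(p, w)²`.

`1 ⇒ 2` and `3 ⇒ 4` are immediate. For `1 ⇒ 3`, a point `w` of `[y, z]` lies on `[y, x_b]` or on
`[x_b, z]`, and convexity carries the point of `[x, y]` near `x_b` to a point of `[y, x]` near `w`.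
For `4 ⇒ 2`, the segment `[x, x_b]` leaves the ray perpendicularly, so the point of `[x_b, y]` at
distance `2cκ` from `x_b` must be `cκ`-close to `[x, y]`. For `2 ⇒ 1`, with `D = d(x_b, [x, y])`,
condition 2 applied to a few auxiliary triangles that stay within `‖x_b‖ + 22D` of the base point
gives `D ≤ 5cκ(‖x_b‖ + 22D)`, and since `κ` is concave and sublinear the `22D` can be absorbed.
-/

section Segments

variable {X : Type*} [MetricSpace X]

lemma left_mem_seg (x y : X) : x ∈ seg x y := by
  simp [seg]

lemma right_mem_seg (x y : X) : y ∈ seg x y := by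
  simp [seg]

lemma seg_comm (x y : X) : seg x y = seg y x := by
  ext p
  change dist x p + dist p y = dist x y ↔ dist y p + dist p x = dist y x
  rw [dist_comm y p, dist_comm p x, dist_comm y x, add_comm]

lemma seg_subset_seg_left {x y q : X} (hq : q ∈ seg x y) : seg x q ⊆ seg x y := by
  intro p hp
  have hq' : dist x q + dist q y = dist x y := hq
  have hp' : dist x p + dist p q = dist x q := hp
  show dist x p + dist p y = dist x y
  linarith [dist_triangle p q y, dist_triangle x p y]

lemma seg_subset_seg_right {x y q : X} (hq : q ∈ seg x y) : seg q y ⊆ seg x y := by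
  rw [seg_comm q, seg_comm x]
  exact seg_subset_seg_left (by rwa [seg_comm])

lemma dist_le_of_mem_seg {x y p : X} (hp : p ∈ seg x y) : dist x p ≤ dist x y := by
  have : dist x p + dist p y = dist x y := hp
  linarith [dist_nonneg (x := p) (y := y)]

lemma isCompact_seg [ProperSpace X] (x y : X) : IsCompact (seg x y) := by
  refine (isCompact_closedBall x (dist x y)).of_isClosed_subset ?_ fun p hp => ?_
  · exact isClosed_eq (by fun_prop) continuous_const
  · rw [mem_closedBall, dist_comm]
    exact dist_le_of_mem_seg hp

lemma exists_mem_seg_dist_eq_infDist [ProperSpace X] (z x y : X) :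
    ∃ p ∈ seg x y, dist z p = infDist z (seg x y) := by
  obtain ⟨p, hp, h⟩ := (isCompact_seg x y).exists_infDist_eq_dist ⟨x, left_mem_seg x y⟩ z
  exact ⟨p, hp, h.symm⟩

end Segments

namespace GeodesicSpace

variable {X : Type*} [MetricSpace X]

lemma exists_path (hG : GeodesicSpace X) (x y : X) :
    ∃ σ : ℝ → X, σ 0 = x ∧ σ 1 = y ∧
      (∀ r ∈ Icc (0:ℝ) 1, ∀ r' ∈ Icc (0:ℝ) 1, dist (σ r) (σ r') = |r - r'| * dist x y) ∧
      ∀ r ∈ Icc (0:ℝ) 1, σ r ∈ seg x y ∧ dist x (σ r) = r * dist x y := by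
  obtain ⟨γ, hγ0, hγ1, hγ⟩ := hG x y
  have hD := dist_nonneg (x := x) (y := y)
  have hmem : ∀ r ∈ Icc (0:ℝ) 1, r * dist x y ∈ Icc 0 (dist x y) := fun r hr =>
    ⟨mul_nonneg hr.1 hD, mul_le_of_le_one_left hD hr.2⟩
  have hσ : ∀ r ∈ Icc (0:ℝ) 1, ∀ r' ∈ Icc (0:ℝ) 1,
      dist (γ (r * dist x y)) (γ (r' * dist x y)) = |r - r'| * dist x y := by
    intro r hr r' hr'
    rw [hγ _ (hmem r hr) _ (hmem r' hr'), ← sub_mul, abs_mul, abs_of_nonneg hD]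
  refine ⟨fun r => γ (r * dist x y), by simpa using hγ0, by simpa using hγ1, hσ, fun r hr => ?_⟩
  have hx := hσ 0 ⟨le_rfl, zero_le_one⟩ r hr
  have hy := hσ r hr 1 ⟨zero_le_one, le_rfl⟩
  rw [zero_mul, hγ0, zero_sub, abs_neg, abs_of_nonneg hr.1] at hx
  rw [one_mul, hγ1, abs_of_nonpos (by linarith [hr.2])] at hy
  refine ⟨?_, hx⟩
  show dist x _ + dist _ y = dist x y
  rw [hx, hy]
  ring

lemma exists_mem_seg_dist_eq (hG : GeodesicSpace X) (x y : X) {r : ℝ} (h0 : 0 ≤ r)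
    (h1 : r ≤ dist x y) : ∃ p ∈ seg x y, dist x p = r := by
  obtain ⟨γ, hγ0, hγ1, hγ⟩ := hG x y
  have hr : r ∈ Icc 0 (dist x y) := ⟨h0, h1⟩
  have hxp := hγ 0 ⟨le_rfl, h0.trans h1⟩ r hr
  have hpy := hγ r hr _ ⟨h0.trans h1, le_rfl⟩
  rw [hγ0, zero_sub, abs_neg, abs_of_nonneg h0] at hxp
  rw [hγ1, abs_of_nonpos (by linarith)] at hpy
  refine ⟨γ r, ?_, hxp⟩
  show dist x (γ r) + dist (γ r) y = dist x y
  rw [hxp, hpy]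
  ring

/-- The point at distance `2E` from `r` on `[r, y]` is too far from `[x, r]`, so it is `E`-close
to `[x, y]`. -/
lemma infDist_le_three_mul_of_perp [ProperSpace X] (hG : GeodesicSpace X)
    {x r y : X} {E : ℝ} (hE : 0 < E) (hperp : ∀ p ∈ seg x r, ∀ w ∈ seg r y, dist r w ≤ dist p w)
    (h : ∀ w ∈ seg r y, infDist w (seg x r ∪ seg x y) ≤ E) : infDist r (seg x y) ≤ 3 * E := by
  rcases le_total (dist r y) (2 * E) with hry | hry
  · linarith [infDist_le_dist_of_mem (x := r) (right_mem_seg x y)]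
  obtain ⟨w, hw, hrw⟩ := hG.exists_mem_seg_dist_eq r y (r := 2 * E) (by positivity) hry
  obtain ⟨p, hp, hwp⟩ := ((isCompact_seg x r).union (isCompact_seg x y)).exists_infDist_eq_dist
    ⟨x, Or.inl (left_mem_seg x r)⟩ w
  have hwp' : dist w p ≤ E := hwp ▸ h w hw
  rcases hp with hp | hp
  · linarith [hperp p hp w hw, dist_comm p w]
  · linarith [infDist_le_dist_of_mem (x := r) hp, dist_triangle r w p]

end GeodesicSpace

lemma nonpos_of_forall_le_mul_half_pow {a B : ℝ} (h : ∀ n : ℕ, a ≤ B * (1 / 2) ^ n) : a ≤ 0 := by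
  have hlim : Tendsto (fun n : ℕ => B * (1 / 2 : ℝ) ^ n) atTop (nhds 0) := by
    simpa using (_root_.tendsto_pow_atTop_nhds_zero_of_lt_one (r := (1 / 2 : ℝ))
      (by norm_num) (by norm_num)).const_mul B
  exact ge_of_tendsto' hlim h

lemma le_mul_of_midpoint_convex {g : ℝ → ℝ} {B : ℝ} (h0 : g 0 ≤ 0)
    (hB : ∀ r ∈ Icc (0:ℝ) 1, g r - r * g 1 ≤ B)
    (hmid : ∀ r ∈ Icc (0:ℝ) 1, ∀ r' ∈ Icc (0:ℝ) 1, g ((r + r') / 2) ≤ (g r + g r') / 2)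
    {r : ℝ} (hr : r ∈ Icc (0:ℝ) 1) : g r ≤ r * g 1 := by
  have hdyadic : ∀ n : ℕ, ∀ r ∈ Icc (0:ℝ) 1, g r - r * g 1 ≤ B * (1 / 2) ^ n := by
    intro n
    induction n with
    | zero => simpa using hB
    | succ n ih =>
      intro r ⟨hr0, hr1⟩
      rw [pow_succ]
      rcases le_total r (1 / 2) with hr | hr
      · have h2r : 2 * r ∈ Icc (0:ℝ) 1 := ⟨by linarith, by linarith⟩
        have := hmid 0 ⟨le_rfl, zero_le_one⟩ (2 * r) h2r
        rw [show (0 + 2 * r) / 2 = r by ring] at this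
        linarith [ih _ h2r]
      · have h2r : 2 * r - 1 ∈ Icc (0:ℝ) 1 := ⟨by linarith, by linarith⟩
        have := hmid (2 * r - 1) h2r 1 ⟨zero_le_one, le_rfl⟩
        rw [show (2 * r - 1 + 1) / 2 = r by ring] at this
        linarith [ih _ h2r]
  linarith [nonpos_of_forall_le_mul_half_pow fun n => hdyadic n r hr]

namespace IsCAT0

variable {X : Type*} [MetricSpace X]

lemma exists_midpoint (hX : IsCAT0 X) (x y : X) :
    ∃ m ∈ seg x y, dist x m = dist x y / 2 ∧ dist m y = dist x y / 2 := by
  obtain ⟨m, hm, hxm⟩ := hX.1.exists_mem_seg_dist_eq x y (r := dist x y / 2) (by positivity)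
    (by linarith [dist_nonneg (x := x) (y := y)])
  have : dist x m + dist m y = dist x y := hm
  exact ⟨m, hm, hxm, by linarith⟩

lemma eq_of_mem_seg (hX : IsCAT0 X) {y z p q : X} (hp : p ∈ seg y z) (hq : q ∈ seg y z)
    (h : dist y p = dist y q) : p = q := by
  obtain ⟨m, -, hpm, hmq⟩ := hX.exists_midpoint p q
  have hp' : dist y p + dist p z = dist y z := hp
  have hq' : dist y q + dist q z = dist y z := hq
  have cy := hX.2 y p q m hpm hmq
  have cz := hX.2 z p q m hpm hmq
  rw [← h] at cy
  rw [dist_comm z p, dist_comm z q, show dist q z = dist p z by linarith] at cz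
  have hym : dist y m ≤ dist y p := (pow_le_pow_iff_left₀ dist_nonneg dist_nonneg two_ne_zero).1
    (by linarith [sq_nonneg (dist p q)])
  have hmz : dist z m ≤ dist p z := (pow_le_pow_iff_left₀ dist_nonneg dist_nonneg two_ne_zero).1
    (by linarith [sq_nonneg (dist p q)])
  have hym' : dist y m = dist y p := by
    linarith [dist_triangle y m z, dist_comm z m]
  rw [hym'] at cy
  exact dist_le_zero.mp (by nlinarith [dist_nonneg (x := p) (y := q)])

lemma dist_midpoints_le_of_eq_left (hX : IsCAT0 X) {a y y' m m' : X}
    (hm : dist a m = dist a y / 2) (hmy : dist m y = dist a y / 2)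
    (hm' : dist a m' = dist a y' / 2) (hmy' : dist m' y' = dist a y' / 2) :
    dist m m' ≤ dist y y' / 2 := by
  have c1 := hX.2 m a y' m' hm' hmy'
  have c2 := hX.2 y' a y m hm hmy
  rw [dist_comm m a, hm, dist_comm m y'] at c1
  rw [dist_comm y' a, dist_comm y' y] at c2
  nlinarith [dist_nonneg (x := m) (y := m'), dist_nonneg (x := y) (y := y')]

lemma dist_midpoints_le (hX : IsCAT0 X) {p q p' q' m m' : X}
    (hm : dist p m = dist p q / 2) (hmq : dist m q = dist p q / 2)
    (hm' : dist p' m' = dist p' q' / 2) (hmq' : dist m' q' = dist p' q' / 2) :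
    dist m m' ≤ (dist p p' + dist q q') / 2 := by
  obtain ⟨n, -, hn, hnq'⟩ := hX.exists_midpoint p q'
  have h1 : dist m n ≤ dist q q' / 2 := hX.dist_midpoints_le_of_eq_left hm hmq hn hnq'
  have h2 : dist n m' ≤ dist p p' / 2 := by
    refine hX.dist_midpoints_le_of_eq_left (a := q') ?_ ?_ ?_ ?_ <;>
      simp only [dist_comm q', dist_comm _ p, dist_comm _ p', hn, hnq', hm', hmq']
  linarith [dist_triangle m n m']

lemma exists_mem_seg_dist_le_mul (hX : IsCAT0 X) {a y y' p : X} {θ : ℝ} (hθ : θ ∈ Icc (0:ℝ) 1)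
    (hp : p ∈ seg a y) (hap : dist a p = θ * dist a y) :
    ∃ q ∈ seg a y', dist p q ≤ θ * dist y y' := by
  obtain ⟨σ, hσ0, hσ1, hσ, hσseg⟩ := hX.1.exists_path a y
  obtain ⟨σ', hσ0', hσ1', hσ', hσseg'⟩ := hX.1.exists_path a y'
  have hmid : ∀ r ∈ Icc (0:ℝ) 1, ∀ r' ∈ Icc (0:ℝ) 1,
      dist (σ ((r + r') / 2)) (σ' ((r + r') / 2)) ≤
        (dist (σ r) (σ' r) + dist (σ r') (σ' r')) / 2 := by
    intro r hr r' hr'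
    have hrr : (r + r') / 2 ∈ Icc (0:ℝ) 1 := ⟨by linarith [hr.1, hr'.1], by linarith [hr.2, hr'.2]⟩
    have half : ∀ s s' : ℝ, |s - (s + s') / 2| = |s - s'| / 2 ∧ |(s + s') / 2 - s'| = |s - s'| / 2 :=
      fun s s' => ⟨by rw [show s - (s + s') / 2 = (s - s') / 2 by ring, abs_div, abs_two],
        by rw [show (s + s') / 2 - s' = (s - s') / 2 by ring, abs_div, abs_two]⟩
    refine hX.dist_midpoints_le ?_ ?_ ?_ ?_
    · rw [hσ r hr _ hrr, hσ r hr r' hr', (half r r').1]; ring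
    · rw [hσ _ hrr r' hr', hσ r hr r' hr', (half r r').2]; ring
    · rw [hσ' r hr _ hrr, hσ' r hr r' hr', (half r r').1]; ring
    · rw [hσ' _ hrr r' hr', hσ' r hr r' hr', (half r r').2]; ring
  have hbound : ∀ r ∈ Icc (0:ℝ) 1, dist (σ r) (σ' r) - r * dist (σ 1) (σ' 1) ≤
      dist a y + dist a y' := by
    intro r hr
    have h1 := dist_triangle (σ r) a (σ' r)
    rw [dist_comm (σ r) a, (hσseg r hr).2, (hσseg' r hr).2] at h1
    nlinarith [hr.1, hr.2, dist_nonneg (x := σ 1) (y := σ' 1), dist_nonneg (x := a) (y := y),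
      dist_nonneg (x := a) (y := y')]
  have hconv := le_mul_of_midpoint_convex (g := fun r => dist (σ r) (σ' r))
    (by simp [hσ0, hσ0']) hbound hmid hθ
  have hpσ : p = σ θ := hX.eq_of_mem_seg hp (hσseg θ hθ).1 (by rw [hap, (hσseg θ hθ).2])
  refine ⟨σ' θ, (hσseg' θ hθ).1, ?_⟩
  simpa only [hpσ, hσ1, hσ1'] using hconv

lemma exists_mem_seg_dist_le_div_mul (hX : IsCAT0 X) {a y p : X} (y' : X) (hp : p ∈ seg a y) :
    ∃ q ∈ seg a y', dist p q ≤ dist a p / dist a y * dist y y' := by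
  have hpy := dist_le_of_mem_seg hp
  refine hX.exists_mem_seg_dist_le_mul ⟨by positivity, div_le_one_of_le₀ hpy dist_nonneg⟩ hp ?_
  rcases eq_or_ne (dist a y) 0 with h | h
  · rw [h, mul_zero]
    exact le_antisymm (h ▸ hpy) dist_nonneg
  · rw [div_mul_cancel₀ _ h]

lemma exists_mem_seg_dist_le (hX : IsCAT0 X) {a y p : X} (y' : X) (hp : p ∈ seg a y) :
    ∃ q ∈ seg a y', dist p q ≤ dist y y' := by
  obtain ⟨q, hq, hpq⟩ := hX.exists_mem_seg_dist_le_div_mul y' hp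
  refine ⟨q, hq, hpq.trans (mul_le_of_le_one_left dist_nonneg ?_)⟩
  exact div_le_one_of_le₀ (dist_le_of_mem_seg hp) dist_nonneg

lemma infDist_seg_le_dist (hX : IsCAT0 X) {a y p : X} (y' : X) (hp : p ∈ seg a y) :
    infDist p (seg a y') ≤ dist y y' := by
  obtain ⟨q, hq, hpq⟩ := hX.exists_mem_seg_dist_le y' hp
  exact (infDist_le_dist_of_mem hq).trans hpq

lemma infDist_seg_le_infDist (hX : IsCAT0 X) {a y p : X} (z : X) (hp : p ∈ seg a y) :
    infDist p (seg a z) ≤ infDist y (seg a z) :=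
  (le_infDist ⟨a, left_mem_seg a z⟩).2 fun q hq =>
    (infDist_le_infDist_of_subset (seg_subset_seg_left hq) ⟨a, left_mem_seg a q⟩).trans
      (hX.infDist_seg_le_dist q hp)

lemma sq_dist_add_sq_dist_le (hX : IsCAT0 X) {C : Set X} (hC : ∀ y ∈ C, ∀ z ∈ C, seg y z ⊆ C)
    {p r w : X} (hr : r ∈ C) (hnear : ∀ c ∈ C, dist p r ≤ dist p c) (hw : w ∈ C) :
    dist p r ^ 2 + dist r w ^ 2 ≤ dist p w ^ 2 := by
  have hdyadic : ∀ n : ℕ, ∀ w ∈ C,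
      dist p r ^ 2 + dist r w ^ 2 - dist p w ^ 2 ≤ dist r w ^ 2 * (1 / 2) ^ n := by
    intro n
    induction n with
    | zero =>
      intro w hw
      have := pow_le_pow_left₀ dist_nonneg (hnear w hw) 2
      linarith
    | succ n ih =>
      intro w hw
      obtain ⟨m, hm, hrm, hmw⟩ := hX.exists_midpoint r w
      have hcn := hX.2 p r w m hrm hmw
      have hih := ih m (hC r hr w hw hm)
      rw [hrm, div_pow] at hih
      rw [pow_succ (1 / 2 : ℝ) n]
      linarith
  linarith [nonpos_of_forall_le_mul_half_pow fun n => hdyadic n w hw]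

lemma dist_le_dist_of_mem_seg_nearest (hX : IsCAT0 X) {C : Set X}
    (hC : ∀ y ∈ C, ∀ z ∈ C, seg y z ⊆ C) {x r p w : X} (hr : r ∈ C)
    (hnear : ∀ c ∈ C, dist x r ≤ dist x c) (hp : p ∈ seg x r) (hw : w ∈ C) :
    dist r w ≤ dist p w := by
  have hp' : dist x p + dist p r = dist x r := hp
  have hnear' : ∀ c ∈ C, dist p r ≤ dist p c := fun c hc => by
    linarith [hnear c hc, dist_triangle x p c]
  have := hX.sq_dist_add_sq_dist_le hC hr hnear' hw
  exact (pow_le_pow_iff_left₀ dist_nonneg dist_nonneg two_ne_zero).1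
    (by linarith [sq_nonneg (dist p r)])

section Proper

variable [ProperSpace X]

/-- Write `D = d(r, q)`. The point of `[q, r]` near `r'` gives `d(q, r') + d(r, r') ≤ D + 2E`, and
the point of `[x, q]` matching the point of `[x, r']` near `r` gives `D ≤ d(q, r') + E`. -/
lemma dist_le_three_mul_of_infDist_le (hX : IsCAT0 X) {x y q r r' : X} {E : ℝ}
    (hq : q ∈ seg x y) (hqr : dist r q = infDist r (seg x y))
    (h₁ : infDist r' (seg q r) ≤ E) (h₂ : infDist r (seg x r') ≤ E) : dist r r' ≤ 3 * E := by
  obtain ⟨p, hp, hr'p⟩ := exists_mem_seg_dist_eq_infDist r' q r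
  obtain ⟨p', hp', hrp'⟩ := exists_mem_seg_dist_eq_infDist r x r'
  have hqpr : dist q p + dist p r = dist q r := hp
  have hclose : dist r q ≤ dist r' q + E := by
    have h₃ : infDist p' (seg x y) ≤ infDist p' (seg x q) :=
      infDist_le_infDist_of_subset (seg_subset_seg_left hq) ⟨x, left_mem_seg x q⟩
    linarith [infDist_le_infDist_add_dist (x := r) (y := p') (s := seg x y),
      hX.infDist_seg_le_dist q hp']
  linarith [dist_triangle q p r', dist_triangle r p r', dist_comm q r, dist_comm r' q,
    dist_comm p r', dist_comm r p]

/-- Write `D = d(r, q)`. By convexity `[q, y]` stays `D`-close to `[r, y] ∋ w`; the point `p` of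
`[q, w]` nearest to `r'` lies within `(D + E) / (20 D)` of the way to `w`, so the matching point
of `[q, y] ⊆ [x, y]` is within `(D + E) / 20` of `p`, whence `D ≤ d(r, r') + E + (D + E) / 20`. -/
lemma nineteen_mul_dist_le (hX : IsCAT0 X) {x y q r r' w : X} {E : ℝ}
    (hq : q ∈ seg x y) (hqr : dist r q = infDist r (seg x y)) (hw : w ∈ seg y r)
    (hqr' : dist q r' ≤ dist r q) (hfar : 21 * dist r q ≤ dist r' w)
    (hE : infDist r' (seg q w) ≤ E) : 19 * dist r q ≤ 20 * dist r r' + 21 * E := by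
  obtain ⟨q₂, hq₂, hwq₂⟩ := hX.exists_mem_seg_dist_le q hw
  obtain ⟨p, hp, hr'p⟩ := exists_mem_seg_dist_eq_infDist r' q w
  obtain ⟨m, hm, hpm⟩ := hX.exists_mem_seg_dist_le_div_mul q₂ hp
  have hmxy : m ∈ seg x y :=
    seg_subset_seg_right hq (seg_subset_seg_left (seg_comm y q ▸ hq₂) hm)
  have hDm : dist r q ≤ dist r m := hqr ▸ infDist_le_dist_of_mem hmxy
  generalize dist r q = D at *
  have hqw : 20 * D ≤ dist q w := by linarith [dist_triangle r' q w, dist_comm q r']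
  have hqp : dist q p ≤ D + E := by linarith [dist_triangle q r' p]
  have hE0 : 0 ≤ E := infDist_nonneg.trans hE
  have hD0 : 0 ≤ D := hqr ▸ infDist_nonneg
  rcases hD0.eq_or_lt with hD | hD
  · rw [← hD]
    linarith [dist_nonneg (x := r) (y := r')]
  have hpm' : dist p m ≤ (D + E) / 20 :=
    calc dist p m ≤ dist q p / dist q w * dist w q₂ := hpm
      _ ≤ (D + E) / (20 * D) * D := by
        gcongr
      _ = (D + E) / 20 := by field_simp
  linarith [dist_triangle r r' m, dist_triangle r' p m]

end Proper

end IsCAT0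

namespace IsGeodesicRay

variable {X : Type*} [MetricSpace X] {b : ℝ → X}

lemma mem_seg_iff (hb : IsGeodesicRay b) {r s t : ℝ} (hr : 0 ≤ r) (hs : 0 ≤ s) (ht : 0 ≤ t) :
    b r ∈ seg (b s) (b t) ↔ r ∈ uIcc s t := by
  change dist (b s) (b r) + dist (b r) (b t) = dist (b s) (b t) ↔ _
  rw [hb s r hs hr, hb r t hr ht, hb s t hs ht, ← segment_eq_uIcc, mem_segment_iff_wbtw,
    ← dist_add_dist_eq_iff, Real.dist_eq, Real.dist_eq, Real.dist_eq]

lemma dist_apply {o : X} (hb : IsGeodesicRay b) (hb0 : b 0 = o) {s : ℝ} (hs : 0 ≤ s) :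
    dist o (b s) = s := by
  rw [← hb0, hb 0 s le_rfl hs, zero_sub, abs_neg, abs_of_nonneg hs]

lemma apply_dist_of_mem_rayIm {o : X} (hb : IsGeodesicRay b) (hb0 : b 0 = o) {y : X}
    (hy : y ∈ rayIm b) : b (dist o y) = y := by
  obtain ⟨s, hs, rfl⟩ := hy
  rw [hb.dist_apply hb0 hs]

lemma seg_subset_rayIm (hX : IsCAT0 X) (hb : IsGeodesicRay b) {y z : X} (hy : y ∈ rayIm b)
    (hz : z ∈ rayIm b) : seg y z ⊆ rayIm b := by
  obtain ⟨s, hs, rfl⟩ := hy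
  obtain ⟨t, ht, rfl⟩ := hz
  wlog hst : s ≤ t generalizing s t
  · rw [seg_comm]
    exact this t ht s hs (le_of_not_ge hst)
  intro p hp
  have hd : dist (b s) p ≤ t - s := by
    have := dist_le_of_mem_seg hp
    rwa [hb s t hs ht, abs_of_nonpos (by linarith), neg_sub] at this
  have hr : 0 ≤ s + dist (b s) p := add_nonneg hs dist_nonneg
  have hbr : b (s + dist (b s) p) ∈ seg (b s) (b t) := by
    rw [hb.mem_seg_iff hr hs ht, uIcc_of_le hst]
    exact ⟨by linarith [dist_nonneg (x := b s) (y := p)], by linarith⟩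
  have hdist : dist (b s) p = dist (b s) (b (s + dist (b s) p)) := by
    rw [hb s _ hs hr, abs_of_nonpos (by linarith [dist_nonneg (x := b s) (y := p)])]
    ring
  exact hX.eq_of_mem_seg hp hbr hdist ▸ mem_image_of_mem b hr

lemma mem_seg_or_mem_seg (hb : IsGeodesicRay b) {y z v w : X} (hy : y ∈ rayIm b)
    (hz : z ∈ rayIm b) (hv : v ∈ rayIm b) (hw : w ∈ rayIm b) (hwyz : w ∈ seg y z) :
    w ∈ seg y v ∨ w ∈ seg v z := by
  obtain ⟨s, hs, rfl⟩ := hy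
  obtain ⟨t, ht, rfl⟩ := hz
  obtain ⟨u, hu, rfl⟩ := hv
  obtain ⟨r, hr, rfl⟩ := hw
  rw [hb.mem_seg_iff hr hs ht] at hwyz
  rw [hb.mem_seg_iff hr hs hu, hb.mem_seg_iff hr hu ht]
  exact uIcc_subset_uIcc_union_uIcc hwyz

end IsGeodesicRay

namespace IsProj

variable {X : Type*} [MetricSpace X] {b : ℝ → X} {π : X → X}

lemma dist_le (hπ : IsProj b π) (x : X) {c : X} (hc : c ∈ rayIm b) : dist x (π x) ≤ dist x c :=
  (hπ x).2 ▸ infDist_le_dist_of_mem hc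

lemma sq_dist_add_sq_dist_le (hX : IsCAT0 X) (hb : IsGeodesicRay b) (hπ : IsProj b π) (x : X)
    {w : X} (hw : w ∈ rayIm b) : dist x (π x) ^ 2 + dist (π x) w ^ 2 ≤ dist x w ^ 2 :=
  hX.sq_dist_add_sq_dist_le (fun _ hy _ hz => hb.seg_subset_rayIm hX hy hz) (hπ x).1
    (fun _ => hπ.dist_le x) hw

lemma dist_le_dist_of_mem_seg (hX : IsCAT0 X) (hb : IsGeodesicRay b) (hπ : IsProj b π)
    {x p w : X} (hp : p ∈ seg x (π x)) (hw : w ∈ rayIm b) : dist (π x) w ≤ dist p w :=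
  hX.dist_le_dist_of_mem_seg_nearest (fun _ hy _ hz => hb.seg_subset_rayIm hX hy hz) (hπ x).1
    (fun _ => hπ.dist_le x) hp hw

end IsProj

lemma ConcaveOn.mul_apply_le_mul_apply {f : ℝ → ℝ} (hf : ConcaveOn ℝ (Ici 0) f) (h0 : 0 ≤ f 0)
    {x y : ℝ} (hx : 0 ≤ x) (hxy : x ≤ y) : x * f y ≤ y * f x := by
  rcases hxy.lt_or_eq with hxy | rfl
  · have hy : 0 < y := hx.trans_lt hxy
    have h := hf.2 (mem_Ici.2 le_rfl) (mem_Ici.2 hy.le)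
      (div_nonneg (sub_nonneg.2 hxy.le) hy.le : 0 ≤ (y - x) / y) (div_nonneg hx hy.le)
      (by field_simp; ring)
    simp only [smul_eq_mul, mul_zero, zero_add, div_mul_cancel₀ x hy.ne'] at h
    have hxy' : x / y * f y ≤ f x :=
      le_trans (le_add_of_nonneg_left (mul_nonneg (div_nonneg (by linarith) hy.le) h0)) h
    calc x * f y = y * (x / y * f y) := by field_simp
      _ ≤ y * f x := mul_le_mul_of_nonneg_left hxy' hy.le
  · exact le_rfl

lemma ConcaveOn.apply_add_le {f : ℝ → ℝ} (hf : ConcaveOn ℝ (Ici 0) f) (h0 : 0 ≤ f 0) {a b : ℝ}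
    (ha : 0 ≤ a) (hb : 0 ≤ b) : f (a + b) ≤ f a + f b := by
  rcases (add_nonneg ha hb).lt_or_eq with hab | hab
  · have h1 := hf.mul_apply_le_mul_apply h0 ha (le_add_of_nonneg_right hb)
    have h2 := hf.mul_apply_le_mul_apply h0 hb (le_add_of_nonneg_left ha)
    have : (a + b) * f (a + b) ≤ (a + b) * (f a + f b) := by linarith
    exact le_of_mul_le_mul_left this hab
  · obtain ⟨rfl, rfl⟩ : a = 0 ∧ b = 0 := ⟨by linarith, by linarith⟩
    simpa using h0

lemma IsSublinearFn.exists_le_mul_of_le_mul {κ : ℝ → ℝ} (hκ : IsSublinearFn κ) {c K : ℝ}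
    (hc : 0 ≤ c) (hK : 0 < K) :
    ∃ C ≥ (0:ℝ), ∀ u D : ℝ, 0 ≤ u → 0 ≤ D → D ≤ c * κ (u + K * D) → D ≤ C * κ u := by
  have hev : ∀ᶠ y in atTop, 2 * c * K * (κ y / y) < 1 := by
    refine (hκ.sublinear.const_mul (2 * c * K)).eventually_lt_const ?_
    simp
  obtain ⟨Z, hZ⟩ := eventually_atTop.1 hev
  set Z' := max Z 1
  have hZ' : 0 ≤ Z' / K := div_nonneg (zero_le_one.trans (le_max_right _ _)) hK.le
  refine ⟨2 * c + Z' / K, by positivity, fun u D hu hD h => ?_⟩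
  have hκ0 : ∀ t, 0 ≤ κ t := fun t => zero_le_one.trans (hκ.one_le t)
  have hκu := hκ.one_le u
  have hsub := hκ.concave.apply_add_le (hκ0 0) hu (mul_nonneg hK.le hD)
  rcases le_or_gt Z' (K * D) with hKD | hKD
  · have hpos : 0 < K * D := lt_of_lt_of_le zero_lt_one ((le_max_right _ _).trans hKD)
    have hsmall := hZ (K * D) ((le_max_left _ _).trans hKD)
    rw [mul_div_assoc', div_lt_one hpos] at hsmall
    have hκKD : 2 * c * κ (K * D) < D := by nlinarith
    nlinarith [mul_le_mul_of_nonneg_left hsub hc, mul_nonneg hZ' (hκ0 u)]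
  · have hD' : D < Z' / K := by rwa [lt_div_iff₀ hK, mul_comm]
    nlinarith [mul_le_mul_of_nonneg_left hκu hZ', mul_nonneg hc (hκ0 u)]

section SlimConditions

variable {X : Type*} [MetricSpace X] {o : X} {κ : ℝ → ℝ} {b : ℝ → X} {π : X → X}

lemma SlimCond1.slimCond2 (hπ : IsProj b π) (h : SlimCond1 κ o b π) : SlimCond2 κ o b π := by
  obtain ⟨c, hc, H⟩ := h
  exact ⟨c, hc, fun x y hy => ⟨π x, ⟨(hπ x).1, left_mem_seg _ _⟩, H x y hy⟩⟩

lemma SlimCond3.slimCond4 (hκ : Monotone κ) (h : SlimCond3 κ o b π) : SlimCond4 κ o b π := by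
  obtain ⟨c, hc, H⟩ := h
  exact ⟨c, hc, fun x y z hyz _ hz w hw =>
    (H x y z hyz w hw).trans (mul_le_mul_of_nonneg_left (hκ hz) hc)⟩

lemma SlimCond1.slimCond3 (hX : IsCAT0 X) (hb : IsGeodesicRay b) (hπ : IsProj b π)
    (h : SlimCond1 κ o b π) : SlimCond3 κ o b π := by
  obtain ⟨c, hc, H⟩ := h
  refine ⟨c, hc, fun x y z hyz w hw => ?_⟩
  have hside : ∀ y' ∈ rayIm b, w ∈ seg y' (π x) →
      infDist w (seg y' x) ≤ c * κ (dist o (π x)) := fun y' hy' hw' =>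
    (hX.infDist_seg_le_infDist x hw').trans (seg_comm x y' ▸ H x y' hy')
  rcases hb.mem_seg_or_mem_seg (hyz (left_mem_seg y z)) (hyz (right_mem_seg y z)) (hπ x).1
    (hyz hw) hw with h | h
  · exact (infDist_le_infDist_of_subset subset_union_left ⟨y, left_mem_seg _ _⟩).trans
      (hside y (hyz (left_mem_seg y z)) h)
  · rw [seg_comm] at h
    have := hside z (hyz (right_mem_seg y z)) h
    rw [seg_comm z x] at this
    exact (infDist_le_infDist_of_subset subset_union_right ⟨x, left_mem_seg _ _⟩).trans this

lemma SlimCond2.exists_forall_infDist_le (hb : IsGeodesicRay b) (hb0 : b 0 = o)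
    (hπ : IsProj b π) (hκ : Monotone κ) (h : SlimCond2 κ o b π) :
    ∃ c ≥ (0:ℝ), ∀ a : X, ∀ s : ℝ, 0 ≤ s →
      infDist (π a) (seg a (b s)) ≤ c * κ (max (dist o (π a)) s) := by
  obtain ⟨c, hc, H⟩ := h
  refine ⟨c, hc, fun a s hs => ?_⟩
  obtain ⟨z, ⟨⟨r, hr, rfl⟩, hz⟩, hle⟩ := H a (b s) (mem_image_of_mem b hs)
  rw [← hb.apply_dist_of_mem_rayIm hb0 (hπ a).1, hb.mem_seg_iff hr dist_nonneg hs] at hz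
  rw [hb.dist_apply hb0 hr] at hle
  exact hle.trans (mul_le_mul_of_nonneg_left (hκ hz.2) hc)

variable [ProperSpace X]

lemma SlimCond4.slimCond2 (hX : IsCAT0 X) (hκ : IsSublinearFn κ)
    (hb : IsGeodesicRay b) (hπ : IsProj b π) (h : SlimCond4 κ o b π) : SlimCond2 κ o b π := by
  obtain ⟨c, hc, H⟩ := h
  refine ⟨3 * (c + 1), by positivity, fun x y hy => ?_⟩
  have hκ0 : ∀ t, 0 ≤ κ t := fun t => zero_le_one.trans (hκ.one_le t)
  have hE : ∀ t, 0 < (c + 1) * κ t := fun t => by nlinarith [hκ.one_le t]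
  have hc' : ∀ t, c * κ t ≤ (c + 1) * κ t := fun t => by nlinarith [hκ0 t]
  have hsub : seg (π x) y ⊆ rayIm b := hb.seg_subset_rayIm hX (hπ x).1 hy
  have hperp : ∀ p ∈ seg x (π x), ∀ w ∈ seg (π x) y, dist (π x) w ≤ dist p w :=
    fun p hp w hw => hπ.dist_le_dist_of_mem_seg hX hb hp (hsub hw)
  simp only [mul_assoc]
  rcases le_total (dist o (π x)) (dist o y) with hxy | hyx
  · refine ⟨y, ⟨hy, right_mem_seg _ _⟩, hX.1.infDist_le_three_mul_of_perp (hE _) hperp ?_⟩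
    intro w hw
    have := H x (π x) y hsub le_rfl hxy w hw
    rw [seg_comm (π x) x] at this
    exact this.trans (hc' _)
  · refine ⟨π x, ⟨(hπ x).1, left_mem_seg _ _⟩,
      hX.1.infDist_le_three_mul_of_perp (hE _) hperp ?_⟩
    intro w hw
    have := H x y (π x) (seg_comm y (π x) ▸ hsub) hyx le_rfl w (seg_comm y (π x) ▸ hw)
    rw [seg_comm y x, union_comm] at this
    exact this.trans (hc' _)

/-- With `q` the point of `[x, b t]` nearest to `x_b` and `v = ‖q_b‖`, the Pythagorean inequality
gives `|v - ‖x_b‖| ≤ D`, so every triangle used has its vertex on `b` at a parameter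
`≤ v + 21 D ≤ ‖x_b‖ + 22 D` (the vertex `b t` is used only when `t ≤ v + 21 D`). -/
lemma infDist_proj_seg_le_of_forall_infDist_le (hX : IsCAT0 X) (hb : IsGeodesicRay b)
    (hb0 : b 0 = o) (hπ : IsProj b π) (x : X) {t E : ℝ} (ht : 0 ≤ t)
    (hE : ∀ a : X, ∀ s : ℝ, 0 ≤ s →
      s ≤ dist o (π x) + 22 * infDist (π x) (seg x (b t)) →
      dist o (π a) ≤ dist o (π x) + 22 * infDist (π x) (seg x (b t)) →
      infDist (π a) (seg a (b s)) ≤ E) :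
    infDist (π x) (seg x (b t)) ≤ 5 * E := by
  set u := dist o (π x)
  set D := infDist (π x) (seg x (b t))
  have hD0 : 0 ≤ D := infDist_nonneg
  have hu0 : 0 ≤ u := dist_nonneg
  have hπx : π x = b u := (hb.apply_dist_of_mem_rayIm hb0 (hπ x).1).symm
  obtain ⟨q, hq, hqD⟩ := exists_mem_seg_dist_eq_infDist (π x) x (b t)
  set v := dist o (π q)
  have hv0 : 0 ≤ v := dist_nonneg
  have hπq : π q = b v := (hb.apply_dist_of_mem_rayIm hb0 (hπ q).1).symm
  have hpyth := hπ.sq_dist_add_sq_dist_le hX hb q (hπ x).1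
  rw [dist_comm q (π x), hqD] at hpyth
  have hA : dist q (π q) ≤ D := (pow_le_pow_iff_left₀ dist_nonneg hD0 two_ne_zero).1
    (by nlinarith [sq_nonneg (dist (π q) (π x))])
  have hg : |v - u| ≤ D := by
    rw [← hb v u hv0 hu0, ← hπq, ← hπx]
    exact (pow_le_pow_iff_left₀ dist_nonneg hD0 two_ne_zero).1
      (by nlinarith [sq_nonneg (dist q (π q))])
  obtain ⟨hvu, huv⟩ := abs_le.1 hg
  have h3E : dist (π x) (π q) ≤ 3 * E := by
    refine hX.dist_le_three_mul_of_infDist_le hq hqD ?_ ?_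
    · rw [hπx]; exact hE q u hu0 (by linarith) (by linarith)
    · rw [hπq]; exact hE x v hv0 (by linarith) (by linarith)
  rcases le_or_gt t (v + 21 * D) with htT | hTt
  · linarith [hE x t ht (by linarith) (by linarith)]
  have hw : b (v + 21 * D) ∈ seg (b t) (π x) := by
    rw [hπx, hb.mem_seg_iff (by linarith) ht hu0]
    exact mem_uIcc_of_ge (by linarith) hTt.le
  have hfar : 21 * dist (π x) q ≤ dist (π q) (b (v + 21 * D)) := by
    rw [hπq, hb v _ hv0 (by linarith), hqD, show v - (v + 21 * D) = -(21 * D) by ring, abs_neg,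
      abs_of_nonneg (by linarith)]
  have h19 := hX.nineteen_mul_dist_le hq hqD hw (by rw [hqD]; exact hA) hfar
    (hE q _ (by linarith) (by linarith) (by linarith))
  rw [hqD] at h19
  linarith

lemma SlimCond2.slimCond1 (hX : IsCAT0 X) (hκ : IsSublinearFn κ) (hb : IsGeodesicRay b)
    (hb0 : b 0 = o) (hπ : IsProj b π) (h : SlimCond2 κ o b π) : SlimCond1 κ o b π := by
  obtain ⟨c, hc, hW⟩ := h.exists_forall_infDist_le hb hb0 hπ hκ.mono
  obtain ⟨C, hC, habsorb⟩ :=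
    hκ.exists_le_mul_of_le_mul (mul_nonneg (by norm_num : (0:ℝ) ≤ 5) hc) (by norm_num : (0:ℝ) < 22)
  refine ⟨C, hC, fun x y hy => ?_⟩
  obtain ⟨t, ht, rfl⟩ := hy
  refine habsorb _ _ dist_nonneg infDist_nonneg ?_
  rw [mul_assoc]
  exact infDist_proj_seg_le_of_forall_infDist_le hX hb hb0 hπ x ht fun a s hs hsR haR =>
    (hW a s hs).trans (mul_le_mul_of_nonneg_left (hκ.mono (max_le haR hsR)) hc)

end SlimConditions

/-- Corollary 3.10. The four κ-slim conditions are pairwise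
equivalent for a geodesic ray in a proper CAT(0) space. -/
theorem slim_conditions_equivalent
    {X : Type*} [MetricSpace X] [ProperSpace X] (hX : IsCAT0 X)
    (o : X) (κ : ℝ → ℝ) (hκ : IsSublinearFn κ)
    (b : ℝ → X) (hb : IsGeodesicRay b) (hb0 : b 0 = o)
    (π : X → X) (hπ : IsProj b π) :
    (SlimCond1 κ o b π ↔ SlimCond2 κ o b π) ∧
    (SlimCond2 κ o b π ↔ SlimCond3 κ o b π) ∧
    (SlimCond3 κ o b π ↔ SlimCond4 κ o b π) := by
  have h12 : SlimCond1 κ o b π → SlimCond2 κ o b π := fun h => h.slimCond2 hπ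
  have h21 : SlimCond2 κ o b π → SlimCond1 κ o b π := fun h => h.slimCond1 hX hκ hb hb0 hπ
  have h13 : SlimCond1 κ o b π → SlimCond3 κ o b π := fun h => h.slimCond3 hX hb hπ
  have h34 : SlimCond3 κ o b π → SlimCond4 κ o b π := fun h => h.slimCond4 hκ.mono
  have h42 : SlimCond4 κ o b π → SlimCond2 κ o b π := fun h => h.slimCond2 hX hκ hb hπ
  exact ⟨⟨h12, h21⟩, ⟨h13 ∘ h21, h42 ∘ h34⟩, ⟨h34, h13 ∘ h21 ∘ h42⟩⟩
end
end

section
/- Let b be a κ-contracting geodesic ray with contracting constant c in a proper CAT(0) space. Then the κ-lower divergence of b satisfies div_κ(r) ≥ r²/(4c) − r for every r > 0; in particular, the κ-lower divergence of b is at least quadratic. -/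
open Set Metric Filter ENNReal

noncomputable section

/-- The set of (continuous, rectifiable-or-not) paths from `b(t - r·κ(t))` to
`b(t + r·κ(t))` avoiding the open ball of radius `r·κ(t)` about `b(t)`. -/
def pathsOutside {X : Type*} [MetricSpace X] (κ : ℝ → ℝ) (b : ℝ → X) (r t : ℝ) :
    Set (ℝ → X) :=
  {γ | ContinuousOn γ (Icc 0 1) ∧ γ 0 = b (t - r * κ t) ∧ γ 1 = b (t + r * κ t) ∧
       ∀ s ∈ Icc (0:ℝ) 1, γ s ∉ ball (b t) (r * κ t)}

/-- `ρ_κ(r,t)`: the infimum of the lengths of paths from `b(t - r·κ(t))` to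
`b(t + r·κ(t))` lying outside the open ball of radius `r·κ(t)` about `b(t)`
(`∞` if there is no such path). -/
noncomputable def rhoKappa {X : Type*} [MetricSpace X] (κ : ℝ → ℝ) (b : ℝ → X)
    (r t : ℝ) : ℝ≥0∞ :=
  ⨅ γ ∈ pathsOutside κ b r t, eVariationOn γ (Icc 0 1)

/-- The κ-lower divergence `div_κ(r) = inf_{t > r·κ(t)} ρ_κ(r,t)/κ(t)`. -/
noncomputable def divKappa {X : Type*} [MetricSpace X] (κ : ℝ → ℝ) (b : ℝ → X)
    (r : ℝ) : ℝ≥0∞ :=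
  ⨅ t ∈ {t : ℝ | r * κ t < t}, rhoKappa κ b r t / ENNReal.ofReal (κ t)
/-!
Put `R = r·κ(t)`, `σ = c·κ(t)` and `u(x) = ‖π x‖`. Along a path `γ` avoiding the open ball of
radius `R` about `b(t)`, `u` runs from `t - R` to `t + R`, and `d(x, b) ≥ R - |u(x) - t|`.
Cut `γ` greedily into chords of length `max (⅔·d(x,b)) (2σ/5)`. A chord starting farther
than `2σ/5` from the ray is shorter than `d(x,b)`, so by contraction it moves `u` by at most
`2σ` while `u(x) ≤ 2t` (concavity gives `κ(2t) ≤ 2κ(t)`); a chord starting closer is too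
short to reach the parameters within `R - 2σ` of `t`. Weighting the motion of `u` by the tent
`max 0 (R - 2σ - |s - t|)`, each chord raises the tent primitive by at most `3σ` times its
length (the last one by at most `2σR`), while the total rise is `(R - 2σ)²`. For `R ≥ 12σ`
this gives `length(γ) ≥ R²/(4σ) - R`; for `R < 12σ` the chord `[γ(0), γ(1)]` of length `2R`
already does.
-/

section Partition

variable {X : Type*} [PseudoMetricSpace X] {γ : ℝ → X} {a b : ℝ}

lemma exists_step_dist_eq (hγ : ContinuousOn γ (Icc a b)) {s ℓ : ℝ} (hs : s ∈ Icc a b)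
    (hℓ : 0 ≤ ℓ) :
    ∃ s' ∈ Icc s b, dist (γ s) (γ s') ≤ ℓ ∧ (s' ≠ b → dist (γ s) (γ s') = ℓ) := by
  by_cases hreach : ℓ ≤ dist (γ s) (γ b)
  · have hcont : ContinuousOn (fun s' => dist (γ s) (γ s')) (Icc s b) :=
      continuous_dist.comp_continuousOn
        (continuousOn_const.prodMk (hγ.mono (Icc_subset_Icc_left hs.1)))
    obtain ⟨s', hs', heq⟩ := intermediate_value_Icc hs.2 hcont (by simpa using ⟨hℓ, hreach⟩)
    exact ⟨s', hs', heq.le, fun _ => heq⟩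
  · exact ⟨b, ⟨hs.2, le_rfl⟩, (not_le.1 hreach).le, fun h => absurd rfl h⟩

lemma exists_partition_dist_eq (hab : a ≤ b) (hγ : ContinuousOn γ (Icc a b)) {ℓ : X → ℝ}
    {δ : ℝ} (hδ : 0 < δ) (hℓ : ∀ x, δ ≤ ℓ x) :
    ∃ (N : ℕ) (s : ℕ → ℝ), Monotone s ∧ (∀ n, s n ∈ Icc a b) ∧ s 0 = a ∧ s (N + 1) = b ∧
      (∀ n ≤ N, dist (γ (s n)) (γ (s (n + 1))) ≤ ℓ (γ (s n))) ∧
      (∀ n < N, dist (γ (s n)) (γ (s (n + 1))) = ℓ (γ (s n))) := by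
  have hstep : ∀ s, ∃ s', s ∈ Icc a b → s' ∈ Icc s b ∧ dist (γ s) (γ s') ≤ ℓ (γ s) ∧
      (s' ≠ b → dist (γ s) (γ s') = ℓ (γ s)) := fun s => by
    by_cases hs : s ∈ Icc a b
    · obtain ⟨s', hs', h⟩ := exists_step_dist_eq hγ hs (hδ.le.trans (hℓ (γ s)))
      exact ⟨s', fun _ => ⟨hs', h⟩⟩
    · exact ⟨s, fun h => absurd h hs⟩
  choose next hnext using hstep
  set s : ℕ → ℝ := fun n => next^[n] a
  have hsucc : ∀ n, s (n + 1) = next (s n) := fun n => Function.iterate_succ_apply' next n a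
  have hmem : ∀ n, s n ∈ Icc a b := by
    intro n
    induction n with
    | zero => exact ⟨le_rfl, hab⟩
    | succ n ih =>
      rw [hsucc]
      exact ⟨ih.1.trans (hnext _ ih).1.1, (hnext _ ih).1.2⟩
  have hmono : Monotone s := monotone_nat_of_le_succ fun n => by
    rw [hsucc]; exact (hnext _ (hmem n)).1.1
  -- chords of length `≥ δ` cannot go on forever along a convergent sequence of times
  have hend : ∃ N, s (N + 1) = b := by
    by_contra! hne
    obtain ⟨L, hL⟩ : ∃ L, Tendsto s atTop (nhds L) :=
      ⟨_, tendsto_atTop_ciSup hmono ⟨b, by rintro _ ⟨n, rfl⟩; exact (hmem n).2⟩⟩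
    have hLmem : L ∈ Icc a b := isClosed_Icc.mem_of_tendsto hL (Eventually.of_forall hmem)
    have hγL : Tendsto (fun n => γ (s n)) atTop (nhds (γ L)) :=
      (hγ L hLmem).tendsto.comp (tendsto_nhdsWithin_iff.2 ⟨hL, Eventually.of_forall hmem⟩)
    have hdist : Tendsto (fun n => dist (γ (s n)) (γ (s (n + 1)))) atTop (nhds 0) := by
      simpa using hγL.dist (hγL.comp (tendsto_add_atTop_nat 1))
    obtain ⟨n, hn⟩ := (hdist.eventually (gt_mem_nhds hδ)).exists
    rw [hsucc, (hnext _ (hmem n)).2.2 (hsucc n ▸ hne n)] at hn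
    exact absurd (hℓ _) (not_le.2 hn)
  classical
  refine ⟨Nat.find hend, s, hmono, hmem, rfl, Nat.find_spec hend, fun n _ => ?_, fun n hn => ?_⟩
  · rw [hsucc]; exact (hnext _ (hmem n)).2.1
  · rw [hsucc]
    exact (hnext _ (hmem n)).2.2 (hsucc n ▸ Nat.find_min hend hn)

lemma ofReal_sum_dist_le_eVariationOn {s : ℕ → ℝ} (hs : Monotone s) {I : Set ℝ}
    (hsI : ∀ n, s n ∈ I) (N : ℕ) :
    ENNReal.ofReal (∑ n ∈ Finset.range N, dist (γ (s n)) (γ (s (n + 1)))) ≤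
      eVariationOn γ I := by
  calc _ = ∑ n ∈ Finset.range N, edist (γ (s (n + 1))) (γ (s n)) := by
        rw [ENNReal.ofReal_sum_of_nonneg fun _ _ => dist_nonneg]
        simp only [edist_dist, dist_comm]
    _ ≤ eVariationOn γ I := eVariationOn.sum_le hs hsI

end Partition

def tent (a t s : ℝ) : ℝ := max 0 (a - |s - t|)

lemma tent_nonneg (a t s : ℝ) : 0 ≤ tent a t s := le_max_left _ _

lemma continuous_tent (a t : ℝ) : Continuous (tent a t) := by
  unfold tent; fun_prop

lemma tent_eq_zero {a t s : ℝ} (h : a ≤ |s - t|) : tent a t s = 0 :=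
  max_eq_left (by linarith)

lemma integral_tent {a R : ℝ} (t : ℝ) (ha : 0 ≤ a) (haR : a ≤ R) :
    ∫ s in (t - R)..(t + R), tent a t s = a ^ 2 := by
  have hcont : Continuous fun x : ℝ => max 0 (a - |x|) := by fun_prop
  have half : ∫ x in (0:ℝ)..R, max 0 (a - |x|) = a ^ 2 / 2 := by
    rw [← intervalIntegral.integral_add_adjacent_intervals (b := a)
      (hcont.intervalIntegrable _ _) (hcont.intervalIntegrable _ _)]
    have hleft : ∫ x in (0:ℝ)..a, max 0 (a - |x|) = ∫ x in (0:ℝ)..a, (a - x) := by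
      refine intervalIntegral.integral_congr fun x hx => ?_
      rw [uIcc_of_le ha] at hx
      simp only [abs_of_nonneg hx.1]
      exact max_eq_right (by linarith [hx.2])
    have hright : ∫ x in a..R, max 0 (a - |x|) = ∫ x in a..R, (0:ℝ) := by
      refine intervalIntegral.integral_congr fun x hx => ?_
      rw [uIcc_of_le haR] at hx
      simp only [abs_of_nonneg (ha.trans hx.1)]
      exact max_eq_left (by linarith [hx.1])
    rw [hleft, hright, intervalIntegral.integral_sub intervalIntegrable_const
      intervalIntegral.intervalIntegrable_id]
    simp only [intervalIntegral.integral_const, integral_id, smul_eq_mul,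
      intervalIntegral.integral_zero]
    ring
  have hneg : ∫ x in -R..0, max 0 (a - |x|) = a ^ 2 / 2 := by
    rw [← half]
    simpa [abs_neg] using
      (intervalIntegral.integral_comp_neg (a := 0) (b := R) fun x => max 0 (a - |x|)).symm
  simp only [tent]
  rw [intervalIntegral.integral_comp_sub_right (fun x => max 0 (a - |x|)),
    show t - R - t = -R by ring, show t + R - t = R by ring,
    ← intervalIntegral.integral_add_adjacent_intervals (b := 0) (hcont.intervalIntegrable _ _)
      (hcont.intervalIntegrable _ _), half, hneg]
  ring

lemma integral_tent_le {a t u v M : ℝ} (h : ∀ s ∈ uIoc u v, tent a t s ≤ M) :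
    ∫ s in u..v, tent a t s ≤ M * |v - u| :=
  (le_abs_self _).trans <| intervalIntegral.norm_integral_le_of_norm_le_const fun s hs => by
    rw [Real.norm_of_nonneg (tent_nonneg a t s)]
    exact h s hs

/-- The increment of the tent primitive along one chord: here `u, v` are the projection
parameters of the ends of a chord of length `d` starting at distance `i` from the ray. -/
lemma integral_tent_step_le {R σ t u v i d : ℝ} (hR : 0 ≤ R) (hσ : 0 < σ) (hi : 0 ≤ i)
    (hfar : R ≤ i + |u - t|) (hjump : |v - u| ≤ 2 * i + 2 * d)
    (hcontr : d < i → u ≤ t + R → |v - u| ≤ 2 * σ) (hd : d ≤ max (2 / 3 * i) (2 * σ / 5)) :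
    ∫ s in u..v, tent (R - 2 * σ) t s ≤ 2 * σ * min i R := by
  have hmin : 0 ≤ min i R := le_min hi hR
  have hrhs : 0 ≤ 2 * σ * min i R := by positivity
  rcases le_total v u with hvu | huv
  · rw [intervalIntegral.integral_symm]
    exact (neg_nonpos.2 (intervalIntegral.integral_nonneg hvu fun s _ => tent_nonneg _ _ _)).trans
      hrhs
  have hflat : (∀ s ∈ Ioc u v, R - 2 * σ ≤ |s - t|) →
      ∫ s in u..v, tent (R - 2 * σ) t s ≤ 2 * σ * min i R := fun h => by
    refine (integral_tent_le (M := 0) fun s hs => ?_).trans (by simpa using hrhs)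
    rw [uIoc_of_le huv] at hs
    exact (tent_eq_zero (h s hs)).le
  rcases le_or_gt i (2 * σ / 5) with hnear | hfar'
  · have hd' : d ≤ 2 * σ / 5 := hd.trans (max_le (by linarith) le_rfl)
    refine hflat fun s hs => ?_
    rcases le_total u t with hut | htu
    · rw [abs_of_nonpos (by linarith)] at hfar
      linarith [hs.2, le_abs_self (v - u), neg_le_abs (s - t)]
    · rw [abs_of_nonneg (by linarith)] at hfar
      linarith [hs.1, le_abs_self (s - t)]
  have hdi : d < i := hd.trans_lt (max_lt (by linarith) hfar')
  rcases le_or_gt (t + R - 2 * σ) u with hend | hmid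
  · exact hflat fun s hs => by linarith [hs.1, le_abs_self (s - t)]
  have hvu : |v - u| ≤ 2 * σ := hcontr hdi (by linarith)
  refine (integral_tent_le (M := min i R) fun s hs => ?_).trans ?_
  · rw [uIoc_of_le huv] at hs
    have hst : |u - t| - 2 * σ ≤ |s - t| := by
      rw [abs_of_nonneg (sub_nonneg.2 huv)] at hvu
      linarith [abs_sub_le u s t, abs_sub_comm u s,
        abs_of_nonneg (by linarith [hs.1] : (0:ℝ) ≤ s - u), hs.2]
    exact max_le hmin (le_min (by linarith) (by linarith [abs_nonneg (u - t)]))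
  · rw [mul_comm]
    exact mul_le_mul_of_nonneg_right hvu hmin

lemma ConcaveOn.apply_two_mul_le {f : ℝ → ℝ} (hf : ConcaveOn ℝ (Ici 0) f) (h0 : 0 ≤ f 0)
    {t : ℝ} (ht : 0 ≤ t) : f (2 * t) ≤ 2 * f t := by
  have h := hf.2 (mem_Ici.2 le_rfl) (mem_Ici.2 (by positivity : (0:ℝ) ≤ 2 * t))
    (by norm_num : (0:ℝ) ≤ 1 / 2) (by norm_num : (0:ℝ) ≤ 1 / 2) (by norm_num)
  simp only [smul_eq_mul] at h
  rw [show (1 / 2 : ℝ) * 0 + 1 / 2 * (2 * t) = t by ring] at h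
  linarith

section GeodesicRay

variable {X : Type*} [MetricSpace X] {o : X} {b : ℝ → X} {π : X → X}

lemma IsGeodesicRay.dist_base (hb : IsGeodesicRay b) (hb0 : b 0 = o) {s : ℝ} (hs : 0 ≤ s) :
    dist o (b s) = s := by
  rw [← hb0, hb 0 s le_rfl hs, zero_sub, abs_neg, abs_of_nonneg hs]

lemma IsProj.apply_of_nonneg (hπ : IsProj b π) {s : ℝ} (hs : 0 ≤ s) : π (b s) = b s := by
  have h : dist (b s) (π (b s)) = 0 := by
    rw [(hπ _).2]
    exact infDist_zero_of_mem ⟨s, hs, rfl⟩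
  exact (dist_eq_zero.1 h).symm

lemma IsProj.dist_base_proj_ray (hb : IsGeodesicRay b) (hb0 : b 0 = o) (hπ : IsProj b π)
    {s : ℝ} (hs : 0 ≤ s) : dist o (π (b s)) = s := by
  rw [hπ.apply_of_nonneg hs, hb.dist_base hb0 hs]

lemma IsProj.ray_dist_proj (hb : IsGeodesicRay b) (hb0 : b 0 = o) (hπ : IsProj b π) (x : X) :
    b (dist o (π x)) = π x := by
  obtain ⟨p, hp, hbp⟩ := (hπ x).1
  rw [← hbp, hb.dist_base hb0 hp]

lemma IsProj.dist_eq (hb : IsGeodesicRay b) (hb0 : b 0 = o) (hπ : IsProj b π) (x y : X) :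
    dist (π x) (π y) = |dist o (π x) - dist o (π y)| := by
  have h := hb _ _ (dist_nonneg (x := o) (y := π x)) (dist_nonneg (x := o) (y := π y))
  rwa [hπ.ray_dist_proj hb hb0, hπ.ray_dist_proj hb hb0] at h

lemma IsProj.dist_ray_le (hb : IsGeodesicRay b) (hb0 : b 0 = o) (hπ : IsProj b π) {t : ℝ}
    (ht : 0 ≤ t) (x : X) : dist x (b t) ≤ infDist x (rayIm b) + |dist o (π x) - t| := by
  calc dist x (b t) ≤ dist x (π x) + dist (π x) (b t) := dist_triangle _ _ _
    _ = infDist x (rayIm b) + |dist o (π x) - t| := by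
      rw [(hπ x).2, ← hπ.ray_dist_proj hb hb0 x, hb _ _ dist_nonneg ht,
        hπ.ray_dist_proj hb hb0 x]

lemma IsProj.abs_sub_le (hb : IsGeodesicRay b) (hb0 : b 0 = o) (hπ : IsProj b π) (x y : X) :
    |dist o (π y) - dist o (π x)| ≤ 2 * infDist x (rayIm b) + 2 * dist x y := by
  rw [← hπ.dist_eq hb hb0]
  have hy : dist (π y) y = infDist y (rayIm b) := by rw [dist_comm]; exact (hπ y).2
  linarith [dist_triangle4 (π y) y x (π x), (hπ x).2, dist_comm y x,
    infDist_le_infDist_add_dist (x := y) (y := x) (s := rayIm b)]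

lemma KappaContractingWith.dist_le_two_mul {κ : ℝ → ℝ} {c t : ℝ}
    (hc : KappaContractingWith κ o b π c) (hκ : IsSublinearFn κ) (ht : 0 ≤ t) {x y : X}
    (hxy : dist x y < infDist x (rayIm b)) (hx : dist o (π x) ≤ 2 * t) :
    dist (π x) (π y) ≤ 2 * (c * κ t) := by
  have hκ2 : κ (dist o (π x)) ≤ 2 * κ t :=
    (hκ.mono hx).trans (hκ.concave.apply_two_mul_le (zero_le_one.trans (hκ.one_le 0)) ht)
  calc dist (π x) (π y) ≤ c * κ (dist o (π x)) := hc.2 x y hxy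
    _ ≤ c * (2 * κ t) := mul_le_mul_of_nonneg_left hκ2 hc.1
    _ = 2 * (c * κ t) := by ring

lemma IsProj.integral_tent_chord_le (hb : IsGeodesicRay b) (hb0 : b 0 = o) (hπ : IsProj b π)
    {R σ t : ℝ} (hR : 0 ≤ R) (hσ : 0 < σ) (ht : 0 ≤ t)
    (hcontr : ∀ x y, dist x y < infDist x (rayIm b) → dist o (π x) ≤ t + R →
      dist (π x) (π y) ≤ 2 * σ)
    {x y : X} (hx : R ≤ dist x (b t))
    (hxy : dist x y ≤ max (2 / 3 * infDist x (rayIm b)) (2 * σ / 5)) :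
    ∫ s in dist o (π x)..dist o (π y), tent (R - 2 * σ) t s ≤
      2 * σ * min (infDist x (rayIm b)) R :=
  integral_tent_step_le hR hσ infDist_nonneg (hx.trans (hπ.dist_ray_le hb hb0 ht x))
    (hπ.abs_sub_le hb hb0 x y)
    (fun hxy' hx' => by
      rw [abs_sub_comm, ← hπ.dist_eq hb hb0]
      exact hcontr x y hxy' hx')
    hxy

lemma IsProj.ofReal_le_eVariationOn (hb : IsGeodesicRay b) (hb0 : b 0 = o) (hπ : IsProj b π)
    {R σ t : ℝ} (hσ : 0 < σ) (hσR : 2 * σ ≤ R) (hRt : R ≤ t)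
    (hcontr : ∀ x y, dist x y < infDist x (rayIm b) → dist o (π x) ≤ t + R →
      dist (π x) (π y) ≤ 2 * σ)
    {γ : ℝ → X} (hγ : ContinuousOn γ (Icc 0 1)) (hγ0 : γ 0 = b (t - R))
    (hγ1 : γ 1 = b (t + R)) (hout : ∀ s ∈ Icc (0:ℝ) 1, R ≤ dist (γ s) (b t)) :
    ENNReal.ofReal (((R - 2 * σ) ^ 2 - 2 * σ * R) / (3 * σ)) ≤ eVariationOn γ (Icc 0 1) := by
  obtain ⟨N, s, hmono, hmem, hs0, hsN, hle, heq⟩ :=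
    exists_partition_dist_eq zero_le_one hγ (by positivity : 0 < 2 * σ / 5)
      (ℓ := fun x => max (2 / 3 * infDist x (rayIm b)) (2 * σ / 5)) fun _ => le_max_right _ _
  set x : ℕ → X := fun n => γ (s n)
  set u : ℕ → ℝ := fun n => dist o (π (x n))
  set D := ∑ n ∈ Finset.range (N + 1), dist (x n) (x (n + 1))
  have hR : 0 ≤ R := by linarith
  have hu0 : u 0 = t - R := by
    simp only [u, x, hs0, hγ0, hπ.dist_base_proj_ray hb hb0 (by linarith : 0 ≤ t - R)]
  have huN : u (N + 1) = t + R := by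
    simp only [u, x, hsN, hγ1, hπ.dist_base_proj_ray hb hb0 (by linarith : 0 ≤ t + R)]
  have hchord : ∀ n ≤ N, ∫ s in u n..u (n + 1), tent (R - 2 * σ) t s ≤
      2 * σ * min (infDist (x n) (rayIm b)) R := fun n hn =>
    hπ.integral_tent_chord_le hb hb0 hR hσ (by linarith) hcontr (hout _ (hmem n)) (hle n hn)
  have hfull : ∀ n < N, 2 * σ * min (infDist (x n) (rayIm b)) R ≤
      3 * σ * dist (x n) (x (n + 1)) := fun n hn => by
    have h : 2 / 3 * infDist (x n) (rayIm b) ≤ dist (x n) (x (n + 1)) :=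
      (le_max_left _ _).trans_eq (heq n hn).symm
    nlinarith [min_le_left (infDist (x n) (rayIm b)) R]
  have htent : (R - 2 * σ) ^ 2 ≤ 3 * σ * D + 2 * σ * R := by
    calc (R - 2 * σ) ^ 2 = ∫ s in u 0..u (N + 1), tent (R - 2 * σ) t s := by
          rw [hu0, huN, integral_tent t (by linarith) (by linarith)]
      _ = ∑ n ∈ Finset.range (N + 1), ∫ s in u n..u (n + 1), tent (R - 2 * σ) t s :=
          (intervalIntegral.sum_integral_adjacent_intervals fun _ _ =>
            (continuous_tent _ _).intervalIntegrable _ _).symm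
      _ ≤ ∑ n ∈ Finset.range N, 3 * σ * dist (x n) (x (n + 1)) + 2 * σ * R := by
          rw [Finset.sum_range_succ]
          refine add_le_add (Finset.sum_le_sum fun n hn => ?_) ?_
          · have hn := Finset.mem_range.1 hn
            exact (hchord n hn.le).trans (hfull n hn)
          · exact (hchord N le_rfl).trans
              (mul_le_mul_of_nonneg_left (min_le_right _ _) (by positivity))
      _ ≤ 3 * σ * D + 2 * σ * R := by
          rw [← Finset.mul_sum]
          gcongr
          exact Finset.sum_le_sum_of_subset_of_nonneg (Finset.range_mono N.le_succ)
            fun _ _ _ => dist_nonneg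
  refine le_trans (ENNReal.ofReal_le_ofReal ?_) (ofReal_sum_dist_le_eVariationOn hmono hmem (N + 1))
  rw [div_le_iff₀ (by positivity)]
  linarith

end GeodesicRay

lemma le_eVariationOn_of_mem_pathsOutside {X : Type*} [MetricSpace X] {o : X} {κ : ℝ → ℝ}
    {b : ℝ → X} {π : X → X} {c r t : ℝ} (hκ : IsSublinearFn κ) (hb : IsGeodesicRay b)
    (hb0 : b 0 = o) (hπ : IsProj b π) (hcpos : 0 < c) (hc : KappaContractingWith κ o b π c)
    (hr : 0 < r) (ht : r * κ t < t) {γ : ℝ → X} (hγ : γ ∈ pathsOutside κ b r t) :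
    ENNReal.ofReal ((r ^ 2 / (4 * c) - r) * κ t) ≤ eVariationOn γ (Icc 0 1) := by
  obtain ⟨hcont, hγ0, hγ1, hout⟩ := hγ
  have hκt : 0 < κ t := one_pos.trans_le (hκ.one_le t)
  have hRt : 0 < r * κ t := by positivity
  rcases le_or_gt r (12 * c) with hsmall | hlarge
  · have hchord : (r ^ 2 / (4 * c) - r) * κ t ≤ 2 * (r * κ t) := by
      have : r ^ 2 / (4 * c) ≤ 3 * r := by
        rw [div_le_iff₀ (by positivity)]
        nlinarith
      nlinarith
    calc ENNReal.ofReal ((r ^ 2 / (4 * c) - r) * κ t) ≤ ENNReal.ofReal (2 * (r * κ t)) :=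
          ENNReal.ofReal_le_ofReal hchord
      _ = edist (γ 0) (γ 1) := by
          rw [edist_dist, hγ0, hγ1, hb _ _ (by linarith) (by linarith),
            show t - r * κ t - (t + r * κ t) = -(2 * (r * κ t)) by ring, abs_neg,
            abs_of_pos (by positivity)]
      _ ≤ eVariationOn γ (Icc 0 1) :=
          eVariationOn.edist_le γ ⟨le_rfl, zero_le_one⟩ ⟨zero_le_one, le_rfl⟩
  · have hlength := hπ.ofReal_le_eVariationOn hb hb0 (σ := c * κ t) (by positivity)
      (by nlinarith) ht.le
      (fun x y hxy hx => hc.dist_le_two_mul hκ (by linarith) hxy (by linarith)) hcont hγ0 hγ1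
      fun s hs => not_lt.1 (hout s hs)
    refine le_trans (ENNReal.ofReal_le_ofReal ?_) hlength
    rw [le_div_iff₀ (by positivity)]
    have hlhs : (r ^ 2 / (4 * c) - r) * κ t * (3 * (c * κ t)) =
        κ t ^ 2 * (3 / 4 * r ^ 2 - 3 * c * r) := by
      field_simp
    rw [hlhs]
    nlinarith [mul_nonneg (sq_nonneg (κ t)) (mul_nonneg hr.le (sub_nonneg.2 hlarge.le)),
      mul_pos (pow_pos hκt 2) (pow_pos hcpos 2)]

theorem divergence_of_contracting_at_least_quadratic_general
    {X : Type*} [MetricSpace X]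
    (o : X) (κ : ℝ → ℝ) (hκ : IsSublinearFn κ)
    (b : ℝ → X) (hb : IsGeodesicRay b) (hb0 : b 0 = o)
    (π : X → X) (hπ : IsProj b π)
    (c : ℝ) (hcpos : 0 < c) (hc : KappaContractingWith κ o b π c) :
    ∀ r : ℝ, 0 < r → ENNReal.ofReal (r ^ 2 / (4 * c) - r) ≤ divKappa κ b r := by
  intro r hr
  rcases le_or_gt (r ^ 2 / (4 * c) - r) 0 with hq | hq
  · rw [ENNReal.ofReal_eq_zero.2 hq]
    exact zero_le
  refine le_iInf₂ fun t ht => ?_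
  have hκt : 0 < κ t := one_pos.trans_le (hκ.one_le t)
  rw [ENNReal.le_div_iff_mul_le (Or.inl (ENNReal.ofReal_pos.2 hκt).ne')
    (Or.inl ENNReal.ofReal_ne_top), ← ENNReal.ofReal_mul hq.le]
  exact le_iInf₂ fun γ hγ =>
    le_eVariationOn_of_mem_pathsOutside hκ hb hb0 hπ hcpos hc hr ht hγ

/-- Theorem 3.11. The κ-lower divergence of a `κ`-contracting geodesic
ray (with contracting constant `c`) satisfies `div_κ(r) ≥ r²/(4c) − r` for every `r > 0`;
in particular it is at least quadratic. -/
theorem divergence_of_contracting_at_least_quadratic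
    {X : Type*} [MetricSpace X] [ProperSpace X] (hX : IsCAT0 X)
    (o : X) (κ : ℝ → ℝ) (hκ : IsSublinearFn κ)
    (b : ℝ → X) (hb : IsGeodesicRay b) (hb0 : b 0 = o)
    (π : X → X) (hπ : IsProj b π)
    (c : ℝ) (hcpos : 0 < c) (hc : KappaContractingWith κ o b π c) :
    ∀ r : ℝ, 0 < r → ENNReal.ofReal (r ^ 2 / (4 * c) - r) ≤ divKappa κ b r :=
  divergence_of_contracting_at_least_quadratic_general o κ hκ b hb hb0 π hπ c hcpos hc
end
end
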